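/- arXiv:1509.05476 — 3 statements merged into one kernel-verified Lean document; each statement's English description precedes it below -/
import Mathlib

section
/- If G is an r-regular simple graph on n vertices with n even and r < n/2, then there exists an (r+1)-regular simple graph on the same vertex set whose edge set contains the edge set of G. -/
/-!
The complement `Gᶜ` has minimum degree `n - 1 - r ≥ n / 2`, so adding a perfect matching of `Gᶜ`
to `G` does it. A graph of minimum degree at least `n / 2` on an even number `n` of vertices has a
perfect matching: in a maximum matching, two unmatched vertices `u`, `v` are adjacent only to
matched vertices, and no matching edge `xy` has `u ~ x` and `v ~ y` (otherwise rematch `ux`, `vy`).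
So the neighbours of `v` and the partners of the neighbours of `u` are disjoint sets avoiding
`u` and `v`, whence `deg u + deg v ≤ n - 2`.
-/

open Equiv Finset

namespace Equiv.Perm

variable {α : Type*} [DecidableEq α] {σ : Perm α} {a b : α}

lemma sq_swap_mul_eq_one (hσ : σ ^ 2 = 1) (hc : σ * swap a b = swap a b * σ) :
    (swap a b * σ) ^ 2 = 1 := by
  rw [sq, mul_assoc, ← mul_assoc σ, hc, mul_assoc, ← sq, hσ, mul_one, swap_mul_self]

lemma card_support_swap_mul_of_isFixedPt [Fintype α] (ha : σ a = a)
    (hb : σ b = b) (hab : a ≠ b) : #(swap a b * σ).support = #σ.support + 2 := by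
  have hd : Disjoint (swap a b) σ := fun v => by
    by_cases hv : v = a ∨ v = b
    · rcases hv with rfl | rfl <;> simp [*]
    · push Not at hv
      exact Or.inl (swap_apply_of_ne_of_ne hv.1 hv.2)
  rw [hd.card_support_mul, card_support_swap hab, add_comm]

end Equiv.Perm

namespace SimpleGraph

variable {V : Type*} {H : SimpleGraph V} {σ : Perm V} {a b : V}

/-- A matching of `H`, encoded as the involution exchanging the two ends of each matching edge
and fixing every unmatched vertex. -/
def IsMatchingPerm (H : SimpleGraph V) (σ : Perm V) : Prop :=
  σ ^ 2 = 1 ∧ ∀ v, σ v ≠ v → H.Adj v (σ v)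

lemma isMatchingPerm_one : H.IsMatchingPerm 1 :=
  ⟨one_pow 2, fun _ h => absurd rfl h⟩

namespace IsMatchingPerm

lemma apply_apply (hσ : H.IsMatchingPerm σ) (v : V) : σ (σ v) = v := by
  rw [← Perm.mul_apply, ← sq, hσ.1, Perm.one_apply]

lemma exists_isPerfectMatching (hσ : H.IsMatchingPerm σ) (hfree : ∀ v, σ v ≠ v) :
    ∃ M : H.Subgraph, M.IsPerfectMatching := by
  refine ⟨{ verts := Set.univ
            Adj := fun v w => σ v = w
            adj_sub := ?_
            edge_vert := fun _ => trivial
            symm := ⟨?_⟩ }, ?_⟩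
  · rintro v _ rfl
    exact hσ.2 v (hfree v)
  · rintro v _ rfl
    exact hσ.apply_apply v
  · exact Subgraph.isPerfectMatching_iff.2 fun v => existsUnique_eq'

variable [DecidableEq V]

lemma swap_mul (hσ : H.IsMatchingPerm σ) (hab : H.Adj a b) (ha : σ a = a) (hb : σ b = b) :
    H.IsMatchingPerm (swap a b * σ) := by
  refine ⟨Perm.sq_swap_mul_eq_one hσ.1 (by rw [mul_swap_eq_swap_mul, ha, hb]), fun v hv => ?_⟩
  rcases eq_or_ne v a with rfl | hva
  · simpa [ha] using hab
  rcases eq_or_ne v b with rfl | hvb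
  · simpa [hb] using hab.symm
  have hσv : swap a b (σ v) = σ v :=
    swap_apply_of_ne_of_ne (ha ▸ σ.injective.ne hva) (hb ▸ σ.injective.ne hvb)
  rw [Perm.mul_apply, hσv] at hv ⊢
  exact hσ.2 v hv

/-- Unmatching the edge at `x`. -/
lemma swap_apply_mul (hσ : H.IsMatchingPerm σ) (x : V) :
    H.IsMatchingPerm (swap x (σ x) * σ) := by
  refine ⟨Perm.sq_swap_mul_eq_one hσ.1 (by rw [mul_swap_eq_swap_mul, hσ.apply_apply, swap_comm]),
    fun v hv => ?_⟩
  rcases eq_or_ne v x with rfl | hvx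
  · simp at hv
  rcases eq_or_ne v (σ x) with rfl | hvσx
  · simp [hσ.apply_apply] at hv
  have hσv : swap x (σ x) (σ v) = σ v :=
    swap_apply_of_ne_of_ne (fun e => hvσx (by rw [← e, hσ.apply_apply]))
      (σ.injective.ne hvx)
  rw [Perm.mul_apply, hσv] at hv ⊢
  exact hσ.2 v hv

section Maximum

variable [Fintype V] (hσ : H.IsMatchingPerm σ)
  (hmax : ∀ τ, H.IsMatchingPerm τ → #τ.support ≤ #σ.support)
include hσ hmax

lemma not_adj_of_isFixedPt (ha : σ a = a) (hb : σ b = b) : ¬H.Adj a b := fun hab => by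
  have := hmax _ (hσ.swap_mul hab ha hb)
  rw [Perm.card_support_swap_mul_of_isFixedPt ha hb hab.ne] at this
  omega

/-- A maximum matching has no augmenting path `u, x, σ x, v`. -/
lemma not_adj_apply_of_adj {u v x : V} (hu : σ u = u) (hv : σ v = v) (huv : u ≠ v)
    (hux : H.Adj u x) : ¬H.Adj v (σ x) := fun hvy => by
  have hx : σ x ≠ x := fun hx => hσ.not_adj_of_isFixedPt hmax hu hx hux
  set y := σ x with hy
  have hxy : x ≠ y := hx.symm
  have hxv : x ≠ v := by rintro rfl; exact hx hv
  have hyu : y ≠ u := fun e => hux.ne (σ.injective (by rw [← hy, e, hu]))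
  set ρ := swap x y * σ
  have hρ : H.IsMatchingPerm ρ := hσ.swap_apply_mul x
  have hρx : ρ x = x := by simp [ρ, ← hy]
  have hρy : ρ y = y := by simp [ρ, show σ y = x from hσ.apply_apply x]
  have hρu : ρ u = u := by simp [ρ, hu, swap_apply_of_ne_of_ne hux.ne hyu.symm]
  have hρv : ρ v = v := by simp [ρ, hv, swap_apply_of_ne_of_ne hxv.symm hvy.ne]
  have hρ' : H.IsMatchingPerm (swap v y * ρ) := hρ.swap_mul hvy hρv hρy
  have hρ'u : (swap v y * ρ) u = u := by
    simp [hρu, swap_apply_of_ne_of_ne huv hyu.symm]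
  have hρ'x : (swap v y * ρ) x = x := by
    simp [hρx, swap_apply_of_ne_of_ne hxv hxy]
  have hcard := hmax _ (hρ'.swap_mul hux hρ'u hρ'x)
  have hσρ : #σ.support = #ρ.support + 2 := by
    rw [← Perm.card_support_swap_mul_of_isFixedPt hρx hρy hxy, swap_mul_self_mul]
  rw [Perm.card_support_swap_mul_of_isFixedPt hρ'u hρ'x hux.ne,
    Perm.card_support_swap_mul_of_isFixedPt hρv hρy hvy.ne] at hcard
  omega

lemma degree_add_degree_add_two_le [DecidableRel H.Adj] {u v : V} (hu : σ u = u) (hv : σ v = v)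
    (huv : u ≠ v) : H.degree u + H.degree v + 2 ≤ Fintype.card V := by
  have hAB : Disjoint ((H.neighborFinset u).map σ.toEmbedding) (H.neighborFinset v) := by
    simp only [Finset.disjoint_left, mem_map, mem_neighborFinset]
    rintro _ ⟨x, hux, rfl⟩
    exact hσ.not_adj_apply_of_adj hmax hu hv huv hux
  have hABC : Disjoint ((H.neighborFinset u).map σ.toEmbedding ∪ H.neighborFinset v) {u, v} := by
    simp only [Finset.disjoint_left, mem_union, mem_map, mem_neighborFinset, mem_insert,
      mem_singleton]
    rintro _ (⟨x, hux, rfl⟩ | hvw) (e | e)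
    · exact hux.ne (σ.injective (e.trans hu.symm)).symm
    · rw [σ.injective (e.trans hv.symm)] at hux
      exact hσ.not_adj_of_isFixedPt hmax hu hv hux
    · exact hσ.not_adj_of_isFixedPt hmax hv hu (e ▸ hvw)
    · exact hvw.ne e.symm
  calc H.degree u + H.degree v + 2
      = #((H.neighborFinset u).map σ.toEmbedding ∪ H.neighborFinset v ∪ {u, v}) := by
        rw [card_union_of_disjoint hABC, card_union_of_disjoint hAB, card_map,
          card_neighborFinset_eq_degree, card_neighborFinset_eq_degree, card_pair huv]
    _ ≤ Fintype.card V := card_le_univ _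

lemma apply_ne_self [DecidableRel H.Adj] (hn : Even (Fintype.card V))
    (hdeg : ∀ v, Fintype.card V ≤ 2 * H.degree v) (u : V) : σ u ≠ u := fun hu => by
  have hfix : Even #σ.supportᶜ := by
    rw [card_compl, Nat.even_sub (card_le_univ _)]
    exact iff_of_true hn (even_iff_two_dvd.2 (Perm.two_dvd_card_support hσ.1))
  have hu' : u ∈ σ.supportᶜ := by simpa using hu
  have hpos := card_pos.2 ⟨u, hu'⟩
  obtain ⟨v, hv, hvu⟩ := exists_mem_ne (s := σ.supportᶜ) (by obtain ⟨k, hk⟩ := hfix; omega) u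
  have := hσ.degree_add_degree_add_two_le hmax hu (by simpa using hv) hvu.symm
  have := hdeg u
  have := hdeg v
  omega

end Maximum

end IsMatchingPerm

theorem exists_isPerfectMatching_of_card_le_two_mul_degree [Fintype V] [DecidableRel H.Adj]
    (hn : Even (Fintype.card V)) (hdeg : ∀ v, Fintype.card V ≤ 2 * H.degree v) :
    ∃ M : H.Subgraph, M.IsPerfectMatching := by
  classical
  obtain ⟨σ, hσ, hmax⟩ := exists_max_image (univ.filter H.IsMatchingPerm)
    (fun σ : Perm V => #σ.support) ⟨1, by simpa using isMatchingPerm_one⟩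
  simp only [mem_filter, mem_univ, true_and] at hσ hmax
  exact hσ.exists_isPerfectMatching (hσ.apply_ne_self hmax hn hdeg)

lemma ncard_neighborSet_sup_spanningCoe [Finite V] {G : SimpleGraph V} {M : Gᶜ.Subgraph}
    (hM : M.IsPerfectMatching) (v : V) :
    ((G ⊔ M.spanningCoe).neighborSet v).ncard = (G.neighborSet v).ncard + 1 := by
  obtain ⟨w, hvw, hw⟩ := Subgraph.isPerfectMatching_iff.1 hM v
  have hne : (G ⊔ M.spanningCoe).neighborSet v = insert w (G.neighborSet v) := by
    ext x
    simp only [mem_neighborSet, sup_adj, Subgraph.spanningCoe_adj, Set.mem_insert_iff]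
    exact ⟨fun h => h.elim Or.inr (Or.inl ∘ hw x),
      fun h => h.elim (fun e => e ▸ Or.inr hvw) Or.inl⟩
  exact hne ▸ Set.ncard_insert_of_notMem (M.adj_sub hvw).2 (Set.toFinite _)

end SimpleGraph

open SimpleGraph in
/-- If `G` is `r`-regular with `n` even and `r < n/2`, then `G` extends to an
`(r+1)`-regular graph on the same vertex set. -/
theorem stmt_1 {V : Type*} [Fintype V] (G : SimpleGraph V) (r : ℕ)
    (hreg : ∀ v : V, (G.neighborSet v).ncard = r)
    (heven : Even (Fintype.card V))
    (hr : 2 * r < Fintype.card V) :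
    ∃ G' : SimpleGraph V, G ≤ G' ∧ ∀ v : V, (G'.neighborSet v).ncard = r + 1 := by
  classical
  have hdeg (v : V) : G.degree v = r := by
    rw [← hreg v, ← card_neighborSet_eq_degree, Set.ncard_eq_toFinset_card', Set.toFinset_card]
  obtain ⟨M, hM⟩ := Gᶜ.exists_isPerfectMatching_of_card_le_two_mul_degree heven fun v => by
    rw [degree_compl, hdeg]
    obtain ⟨k, hk⟩ := heven
    omega
  exact ⟨G ⊔ M.spanningCoe, le_sup_left, fun v => by
    rw [ncard_neighborSet_sup_spanningCoe hM, hreg]⟩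
end

section
/- Let n be even and G an r-regular graph on n vertices with r ≥ n/2. If G contains as a spanning induced subgraph a complete bipartite graph whose two parts both have odd cardinality, then the complement of G has no perfect matching; hence G cannot be extended to an (r+1)-regular graph on the same vertices. -/
/-!
The perfect matching of `Gᶜ` cannot leave `A`, since every edge between `A` and its complement
lies in `G`; so it would restrict to a perfect matching of the odd set `A`. An `(r+1)`-regular
supergraph `G'` of the `r`-regular `G` would give exactly such a matching, namely `G' \ G`.
-/

namespace SimpleGraph

variable {V : Type*} {H : SimpleGraph V}

theorem Subgraph.IsPerfectMatching.even_ncard_of_forall_not_adj {M : H.Subgraph}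
    (hM : M.IsPerfectMatching) {s : Set V} (hs : s.Finite)
    (hclosed : ∀ v ∈ s, ∀ w ∉ s, ¬ H.Adj v w) : Even s.ncard := by
  have hmatch : (M.induce s).IsMatching := by
    intro v hv
    obtain ⟨w, hvw, huniq⟩ := hM.1 (hM.2 v)
    have hw : w ∈ s := by_contra fun hw ↦ hclosed v hv w hw (M.adj_sub hvw)
    exact ⟨w, ⟨hv, hw, hvw⟩, fun y hy ↦ huniq y hy.2.2⟩
  have : Fintype (M.induce s).verts := hs.fintype
  simpa only [Set.toFinset_card, ← Nat.card_eq_fintype_card, Nat.card_coe_set_eq,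
    Subgraph.induce_verts] using hmatch.even_card

theorem existsUnique_sdiff_adj_of_le {G G' : SimpleGraph V} (hle : G ≤ G') {r : ℕ} {v : V}
    (hG : (G.neighborSet v).ncard = r) (hG' : (G'.neighborSet v).ncard = r + 1) :
    ∃! w, (G' \ G).Adj v w := by
  have hsub : G.neighborSet v ⊆ G'.neighborSet v := fun _ h ↦ hle h
  have hfin : (G.neighborSet v).Finite :=
    (Set.finite_of_ncard_ne_zero (by omega)).subset hsub
  have hone : ((G' \ G).neighborSet v).ncard = 1 := by
    rw [neighborSet_sdiff, Set.ncard_sdiff hsub hfin, hG, hG']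
    omega
  obtain ⟨w, hw⟩ := Set.ncard_eq_one.mp hone
  exact ⟨w, hw.ge rfl, fun y hy ↦ hw.le hy⟩

theorem exists_isPerfectMatching_compl_of_le {G G' : SimpleGraph V} (hle : G ≤ G') (r : ℕ)
    (hG : ∀ v, (G.neighborSet v).ncard = r) (hG' : ∀ v, (G'.neighborSet v).ncard = r + 1) :
    ∃ M : Gᶜ.Subgraph, M.IsPerfectMatching :=
  ⟨toSubgraph (G' \ G) fun _ _ h ↦ (compl_adj G _ _).mpr ⟨h.1.ne, h.2⟩,
    Subgraph.isPerfectMatching_iff.mpr fun v ↦ existsUnique_sdiff_adj_of_le hle (hG v) (hG' v)⟩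

end SimpleGraph

theorem stmt_8_general {V : Type*} (G : SimpleGraph V) (r : ℕ)
    (hreg : ∀ v : V, (G.neighborSet v).ncard = r)
    (A : Set V) (hAodd : Odd A.ncard)
    (hbip : ∀ a ∈ A, ∀ b ∈ (Aᶜ : Set V), G.Adj a b) :
    (¬ ∃ M : Gᶜ.Subgraph, M.IsPerfectMatching) ∧
      ¬ ∃ G' : SimpleGraph V, G ≤ G' ∧ ∀ v : V, (G'.neighborSet v).ncard = r + 1 := by
  have hnoPM : ¬ ∃ M : Gᶜ.Subgraph, M.IsPerfectMatching := by
    rintro ⟨M, hM⟩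
    refine Nat.not_even_iff_odd.mpr hAodd (hM.even_ncard_of_forall_not_adj ?_ ?_)
    · exact Set.finite_of_ncard_ne_zero hAodd.pos.ne'
    · exact fun a ha b hb hadj ↦ hadj.2 (hbip a ha b hb)
  refine ⟨hnoPM, ?_⟩
  rintro ⟨G', hle, hreg'⟩
  exact hnoPM (G.exists_isPerfectMatching_compl_of_le hle r hreg hreg')

/-- If `G` is `r`-regular with `n` even, `r ≥ n/2`, and `G` contains a spanning
induced complete bipartite subgraph with both parts of odd size, then `Gᶜ` has no
perfect matching and `G` cannot be extended to an `(r+1)`-regular graph. -/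
theorem stmt_8 {V : Type*} [Fintype V] (G : SimpleGraph V) (r : ℕ)
    (hreg : ∀ v : V, (G.neighborSet v).ncard = r)
    (heven : Even (Fintype.card V))
    (hr : Fintype.card V ≤ 2 * r)
    (A : Set V) (hAodd : Odd A.ncard) (hAcodd : Odd (Aᶜ : Set V).ncard)
    (hbip : ∀ a ∈ A, ∀ b ∈ (Aᶜ : Set V), G.Adj a b) :
    (¬ ∃ M : Gᶜ.Subgraph, M.IsPerfectMatching) ∧
      ¬ ∃ G' : SimpleGraph V, G ≤ G' ∧ ∀ v : V, (G'.neighborSet v).ncard = r + 1 :=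
  stmt_8_general G r hreg A hAodd hbip
end

section
/- Let G be an r-regular graph with r odd and let C be a connected component of G - S for some vertex set S, with C having y vertices, 1 ≤ y ≤ r. Then the number of edges of G joining C to S is at least y(r - y + 1), and hence at least r. -/
/-!
Every vertex `v` of `C` has `r` neighbours, and those outside `S` lie in `C \ {v}`, so at least
`r - (y - 1)` of them lie in `S`. Summing over the `y` vertices of `C` gives `y * (r - y + 1)`
edges to `S`, and `x * (r - x + 1) ≥ r` for `1 ≤ x ≤ r`.
-/

open Finset

theorem Set.ncard_setOf_fst_mem_and_eq_sum {α β : Type*} [Fintype β] (A : Set α) [Fintype A]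
    (P : α → β → Prop) [∀ a, DecidablePred (P a)] :
    {p : α × β | p.1 ∈ A ∧ P p.1 p.2}.ncard = ∑ a ∈ A.toFinset, #{b | P a b} := by
  have : {p : α × β | p.1 ∈ A ∧ P p.1 p.2} =
      ↑(Finset.filter (fun p : α × β => P p.1 p.2) (A.toFinset ×ˢ Finset.univ)) := by
    ext; simp
  rw [this, Set.ncard_coe_finset, card_filter, sum_product]
  refine sum_congr rfl fun a _ => ?_
  rw [card_filter]

theorem Nat.le_mul_sub_add_one {x r : ℕ} (hx : 1 ≤ x) (hxr : x ≤ r) : r ≤ x * (r - x + 1) := by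
  obtain ⟨x, rfl⟩ := Nat.exists_eq_add_of_le hx
  obtain ⟨r, rfl⟩ := Nat.exists_eq_add_of_le hxr
  rw [Nat.add_sub_cancel_left]
  nlinarith

namespace SimpleGraph

variable {V : Type*} {G : SimpleGraph V}

theorem mem_image_supp_induce_of_adj {s : Set V} {C : (G.induce s).ConnectedComponent} {v w : V}
    (hv : v ∈ Subtype.val '' C.supp) (hw : w ∈ s) (hadj : G.Adj v w) :
    w ∈ Subtype.val '' C.supp := by
  obtain ⟨v, hvC, rfl⟩ := hv
  exact ⟨⟨w, hw⟩, C.mem_supp_of_adj_mem_supp hvC (by simpa using hadj), rfl⟩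

theorem degree_le_card_neighbors_mem_add [Fintype V] [DecidableEq V] [DecidableRel G.Adj]
    {S : Set V} [DecidablePred (· ∈ S)] {T : Finset V} {v : V} (hv : v ∈ T)
    (hT : ∀ w, w ∉ S → G.Adj v w → w ∈ T) :
    G.degree v ≤ #{w | w ∈ S ∧ G.Adj v w} + (#T - 1) := by
  have hout : #{w ∈ G.neighborFinset v | w ∉ S} ≤ #T - 1 := by
    rw [← card_erase_of_mem hv]
    refine card_le_card fun w hw => ?_
    simp only [mem_filter, mem_neighborFinset] at hw
    exact mem_erase.2 ⟨hw.1.ne', hT w hw.2 hw.1⟩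
  have hin : {w ∈ G.neighborFinset v | w ∈ S} = filter (fun w => w ∈ S ∧ G.Adj v w) univ := by
    ext w; simp [and_comm]
  rw [← card_neighborFinset_eq_degree, ← card_filter_add_card_filter_not (· ∈ S), hin]
  omega

end SimpleGraph

theorem stmt_13_general {V : Type*} [Fintype V] (G : SimpleGraph V) (r : ℕ)
    (hreg : ∀ v : V, (G.neighborSet v).ncard = r)
    (S : Set V) (C : (G.induce (Sᶜ : Set V)).ConnectedComponent) (y : ℕ)
    (hy : Nat.card C.supp = y) (hy1 : 1 ≤ y) (hyr : y ≤ r) :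
    y * (r - y + 1) ≤
        {p : V × V | p.1 ∈ Subtype.val '' C.supp ∧ p.2 ∈ S ∧ G.Adj p.1 p.2}.ncard ∧
      r ≤ {p : V × V | p.1 ∈ Subtype.val '' C.supp ∧ p.2 ∈ S ∧ G.Adj p.1 p.2}.ncard := by
  classical
  set T := (Subtype.val '' C.supp).toFinset
  have hT : #T = y := by
    rw [Set.toFinset_card, Set.card_image_of_injective _ Subtype.val_injective,
      ← Nat.card_eq_fintype_card, hy]
  have hdeg (v : V) : G.degree v = r := by
    rw [← G.card_neighborFinset_eq_degree, SimpleGraph.neighborFinset_def,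
      ← Set.ncard_eq_toFinset_card', hreg]
  have hedges : y * (r - y + 1) ≤
      {p : V × V | p.1 ∈ Subtype.val '' C.supp ∧ p.2 ∈ S ∧ G.Adj p.1 p.2}.ncard := by
    rw [Set.ncard_setOf_fst_mem_and_eq_sum _ fun v w => w ∈ S ∧ G.Adj v w, ← hT, ← smul_eq_mul,
      ← sum_const]
    refine sum_le_sum fun v hv => ?_
    have hv_edges := G.degree_le_card_neighbors_mem_add hv fun w hw hadj =>
      Set.mem_toFinset.2 <| SimpleGraph.mem_image_supp_induce_of_adj
        (Set.mem_toFinset.1 hv) hw hadj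
    rw [hdeg, hT] at hv_edges
    omega
  exact ⟨hedges, (Nat.le_mul_sub_add_one hy1 hyr).trans hedges⟩

/-- Let `G` be `r`-regular with `r` odd, `S` a vertex set, and `C` a connected
component of `G - S` with `y` vertices, `1 ≤ y ≤ r`. Then the number of edges of `G`
joining `C` to `S` is at least `y * (r - y + 1)`, hence at least `r`. -/
theorem stmt_13 {V : Type*} [Fintype V] (G : SimpleGraph V) (r : ℕ)
    (hreg : ∀ v : V, (G.neighborSet v).ncard = r) (hodd : Odd r)
    (S : Set V) (C : (G.induce (Sᶜ : Set V)).ConnectedComponent) (y : ℕ)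
    (hy : Nat.card C.supp = y) (hy1 : 1 ≤ y) (hyr : y ≤ r) :
    y * (r - y + 1) ≤
        {p : V × V | p.1 ∈ Subtype.val '' C.supp ∧ p.2 ∈ S ∧ G.Adj p.1 p.2}.ncard ∧
      r ≤ {p : V × V | p.1 ∈ Subtype.val '' C.supp ∧ p.2 ∈ S ∧ G.Adj p.1 p.2}.ncard :=
  stmt_13_general G r hreg S C y hy hy1 hyr
end
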